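/- arXiv:2210.00194 — 2 statements merged into one kernel-verified Lean document; each statement's English description precedes it below -/
import Mathlib

section
/- For convex bodies K and C in ℝ^n and λ ∈ (0,1), one has V((1-λ)K + λC) ≥ V(K)^(1-λ) · V(C)^λ. -/
/-!
The inequality is the Prékopa–Leindler inequality `(∫ f)^p (∫ g)^q ≤ ∫ h`, valid whenever
`f x ^ p * g y ^ q ≤ h (p • x + q • y)` and `p + q = 1`, applied to indicator functions.

On the line, translating compact `A` and `B` so that they touch at a single point gives
`|A| + |B| ≤ |A + B|`. Applied to the superlevel sets `{f > s}` and `{g > s}`, whose weighted sum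
lies in `{h > s}`, and integrated over `s` (layer cake), this yields `p ∫ f + q ∫ g ≤ ∫ h` as soon
as `sup f = sup g`; rescaling `f` to achieve this and the weighted AM–GM inequality give
Prékopa–Leindler for bounded functions, and truncation removes the boundedness. Fubini's theorem
carries the inequality from `ℝ` and `ℝⁿ` to `ℝ × ℝⁿ = ℝⁿ⁺¹`.
-/

open MeasureTheory Set
open scoped Pointwise ENNReal NNReal

theorem ENNReal.geom_mean_le_arith_mean2_weighted {p q : ℝ} (hp : 0 < p) (hq : 0 < q)
    (hpq : p + q = 1) (a b : ℝ≥0∞) :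
    a ^ p * b ^ q ≤ ENNReal.ofReal p * a + ENNReal.ofReal q * b := by
  rcases eq_or_ne a ⊤ with rfl | ha
  · simp [ENNReal.mul_top, hp]
  rcases eq_or_ne b ⊤ with rfl | hb
  · simp [ENNReal.mul_top, hq]
  lift a to ℝ≥0 using ha
  lift b to ℝ≥0 using hb
  lift p to ℝ≥0 using hp.le
  lift q to ℝ≥0 using hq.le
  rw [← ENNReal.coe_rpow_of_nonneg _ p.coe_nonneg, ← ENNReal.coe_rpow_of_nonneg _ q.coe_nonneg,
    ENNReal.ofReal_coe_nnreal, ENNReal.ofReal_coe_nnreal]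
  exact_mod_cast NNReal.geom_mean_le_arith_mean2_weighted p q a b (by exact_mod_cast hpq)

theorem lintegral_eq_lintegral_meas_ofReal_lt {α : Type*} [MeasurableSpace α] (μ : Measure α)
    [SFinite μ] {f : α → ℝ≥0∞} (hf : Measurable f) :
    ∫⁻ x, f x ∂μ = ∫⁻ t in Ioi 0, μ {x | ENNReal.ofReal t < f x} := by
  have hS : MeasurableSet {z : α × ℝ | ENNReal.ofReal z.2 < f z.1} :=
    measurableSet_lt (by fun_prop) (hf.comp measurable_fst)
  have hlevel (a : ℝ≥0∞) : volume.restrict (Ioi (0 : ℝ)) {t | ENNReal.ofReal t < a} = a := by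
    rw [Measure.restrict_apply (measurableSet_lt (by fun_prop) measurable_const)]
    rcases eq_or_ne a ⊤ with rfl | ha
    · simp
    · have : {t | ENNReal.ofReal t < a} ∩ Ioi 0 = Ioo 0 a.toReal := by
        ext t
        simp only [mem_inter_iff, mem_ofPred_eq, mem_Ioi, mem_Ioo]
        constructor
        · rintro ⟨hta, ht⟩
          exact ⟨ht, (ENNReal.ofReal_lt_iff_lt_toReal ht.le ha).1 hta⟩
        · rintro ⟨ht, hta⟩
          exact ⟨(ENNReal.ofReal_lt_iff_lt_toReal ht.le ha).2 hta, ht⟩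
      simp [this, ha]
  calc ∫⁻ x, f x ∂μ = μ.prod (volume.restrict (Ioi 0)) {z | ENNReal.ofReal z.2 < f z.1} := by
        simp [Measure.prod_apply hS, hlevel]
    _ = ∫⁻ t in Ioi 0, μ {x | ENNReal.ofReal t < f x} := by
        simp [Measure.prod_apply_symm hS]

theorem lintegral_eq_iSup_lintegral_min_natCast {α : Type*} [MeasurableSpace α] {μ : Measure α}
    {f : α → ℝ≥0∞} (hf : Measurable f) :
    ∫⁻ x, f x ∂μ = ⨆ n : ℕ, ∫⁻ x, min (f x) n ∂μ := by
  rw [← lintegral_iSup (fun n => hf.min measurable_const)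
    fun m n hmn x => min_le_min_left _ (Nat.mono_cast hmn)]
  congr with x
  rw [← inf_iSup_eq, ENNReal.iSup_natCast, inf_top_eq]

theorem Real.volume_add_volume_le_volume_add_of_isCompact {A B : Set ℝ} (hA : IsCompact A)
    (hB : IsCompact B) (hA₀ : A.Nonempty) (hB₀ : B.Nonempty) :
    volume A + volume B ≤ volume (A + B) := by
  set a := sSup A
  set b := sInf B
  have hsub : (b +ᵥ A) ∪ (a +ᵥ B) ⊆ A + B := by
    rintro _ (⟨x, hx, rfl⟩ | ⟨y, hy, rfl⟩)
    · exact ⟨x, hx, b, hB.sInf_mem hB₀, add_comm x b⟩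
    · exact add_mem_add (hA.sSup_mem hA₀) hy
  have hinter : (b +ᵥ A) ∩ (a +ᵥ B) ⊆ {a + b} := by
    rintro _ ⟨⟨x, hx, rfl⟩, ⟨y, hy, hxy⟩⟩
    have := le_csSup hA.bddAbove hx
    have := csInf_le hB.bddBelow hy
    simp only [vadd_eq_add, mem_singleton_iff] at hxy ⊢
    linarith
  calc volume A + volume B = volume (b +ᵥ A) + volume (a +ᵥ B) := by
        rw [measure_vadd, measure_vadd]
    _ = volume ((b +ᵥ A) ∪ (a +ᵥ B)) + volume ((b +ᵥ A) ∩ (a +ᵥ B)) :=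
        (measure_union_add_inter _ (hB.isClosed.measurableSet.const_vadd a)).symm
    _ = volume ((b +ᵥ A) ∪ (a +ᵥ B)) := by
        rw [measure_mono_null hinter (measure_singleton _), add_zero]
    _ ≤ volume (A + B) := measure_mono hsub

theorem Real.volume_add_volume_le_volume_add {A B : Set ℝ} (hA : MeasurableSet A)
    (hB : MeasurableSet B) (hA₀ : A.Nonempty) (hB₀ : B.Nonempty) :
    volume A + volume B ≤ volume (A + B) := by
  obtain ⟨a, ha⟩ := hA₀
  obtain ⟨b, hb⟩ := hB₀
  rw [hA.measure_eq_iSup_isCompact, hB.measure_eq_iSup_isCompact]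
  simp only [iSup_and']
  refine ENNReal.biSup_add_biSup_le' ⟨∅, empty_subset _, isCompact_empty⟩
    ⟨∅, empty_subset _, isCompact_empty⟩ fun K ⟨hKA, hK⟩ L ⟨hLB, hL⟩ => ?_
  calc volume K + volume L ≤ volume (insert a K) + volume (insert b L) := by
        gcongr <;> exact subset_insert _ _
    _ ≤ volume (insert a K + insert b L) :=
        Real.volume_add_volume_le_volume_add_of_isCompact (hK.insert a) (hL.insert b)
          (insert_nonempty _ _) (insert_nonempty _ _)
    _ ≤ volume (A + B) :=
        measure_mono (add_subset_add (insert_subset ha hKA) (insert_subset hb hLB))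

theorem Real.ofReal_mul_volume_add_le_volume_smul_add_smul {A B : Set ℝ} {p q : ℝ} (hp : 0 < p)
    (hq : 0 < q) (hA : MeasurableSet A) (hB : MeasurableSet B) (hA₀ : A.Nonempty)
    (hB₀ : B.Nonempty) :
    ENNReal.ofReal p * volume A + ENNReal.ofReal q * volume B ≤ volume (p • A + q • B) := by
  have hsmul {r : ℝ} (hr : 0 < r) (S : Set ℝ) : volume (r • S) = ENNReal.ofReal r * volume S := by
    simp [Measure.addHaar_smul_of_nonneg _ hr.le]
  rw [← hsmul hp, ← hsmul hq]
  exact Real.volume_add_volume_le_volume_add (hA.const_smul₀ p) (hB.const_smul₀ q)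
    hA₀.smul_set hB₀.smul_set

theorem Real.ofReal_mul_volume_lt_add_le_volume_lt {p q : ℝ} (hp : 0 < p) (hq : 0 < q)
    (hpq : p + q = 1) {f g h : ℝ → ℝ≥0∞} (hf : Measurable f) (hg : Measurable g)
    (hfgh : ∀ x y, f x ^ p * g y ^ q ≤ h (p * x + q * y)) {s : ℝ≥0∞}
    (hfs : ∃ x, s < f x) (hgs : ∃ y, s < g y) :
    ENNReal.ofReal p * volume {x | s < f x} + ENNReal.ofReal q * volume {y | s < g y} ≤
      volume {z | s < h z} := by
  refine (Real.ofReal_mul_volume_add_le_volume_smul_add_smul hp hq (hf measurableSet_Ioi)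
    (hg measurableSet_Ioi) hfs hgs).trans (measure_mono ?_)
  rintro _ ⟨_, ⟨x, hx, rfl⟩, _, ⟨y, hy, rfl⟩, rfl⟩
  calc s = s ^ p * s ^ q := by
        rw [← ENNReal.rpow_add_of_nonneg _ _ hp.le hq.le, hpq, ENNReal.rpow_one]
    _ < f x ^ p * g y ^ q :=
        ENNReal.mul_lt_mul (ENNReal.rpow_lt_rpow hx hp) (ENNReal.rpow_lt_rpow hy hq)
    _ ≤ h (p * x + q * y) := hfgh x y

theorem Real.ofReal_mul_lintegral_add_le_of_iSup_eq {p q : ℝ} (hp : 0 < p) (hq : 0 < q)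
    (hpq : p + q = 1) {f g h : ℝ → ℝ≥0∞} (hf : Measurable f) (hg : Measurable g)
    (hh : Measurable h) (hfgh : ∀ x y, f x ^ p * g y ^ q ≤ h (p * x + q * y))
    (hsup : ⨆ x, f x = ⨆ y, g y) :
    ENNReal.ofReal p * (∫⁻ x, f x) + ENNReal.ofReal q * ∫⁻ y, g y ≤ ∫⁻ z, h z := by
  -- at every level the superlevel sets of `f` and `g` are both nonempty or both empty
  have hlevel (t : ℝ) : ENNReal.ofReal p * volume {x | ENNReal.ofReal t < f x} +
      ENNReal.ofReal q * volume {y | ENNReal.ofReal t < g y} ≤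
        volume {z | ENNReal.ofReal t < h z} := by
    by_cases ht : ENNReal.ofReal t < ⨆ x, f x
    · exact Real.ofReal_mul_volume_lt_add_le_volume_lt hp hq hpq hf hg hfgh
        (lt_iSup_iff.1 ht) (lt_iSup_iff.1 (hsup ▸ ht))
    · rw [not_lt, iSup_le_iff] at ht
      have hg' : ∀ y, g y ≤ ENNReal.ofReal t := iSup_le_iff.1 (hsup ▸ iSup_le ht)
      simp [fun x => not_lt.2 (ht x), fun y => not_lt.2 (hg' y)]
  rw [lintegral_eq_lintegral_meas_ofReal_lt volume hf,
    lintegral_eq_lintegral_meas_ofReal_lt volume hg,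
    lintegral_eq_lintegral_meas_ofReal_lt volume hh]
  calc _ ≤ ∫⁻ t in Ioi 0, ENNReal.ofReal p * volume {x | ENNReal.ofReal t < f x} +
        ENNReal.ofReal q * volume {y | ENNReal.ofReal t < g y} :=
        (add_le_add (lintegral_const_mul_le _ _) (lintegral_const_mul_le _ _)).trans
          (le_lintegral_add _ _)
    _ ≤ _ := lintegral_mono hlevel

theorem Real.lintegral_rpow_mul_rpow_le_of_iSup_ne_top {p q : ℝ} (hp : 0 < p) (hq : 0 < q)
    (hpq : p + q = 1) {f g h : ℝ → ℝ≥0∞} (hf : Measurable f) (hg : Measurable g)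
    (hh : Measurable h) (hfgh : ∀ x y, f x ^ p * g y ^ q ≤ h (p * x + q * y))
    (hF : ⨆ x, f x ≠ ⊤) (hG : ⨆ y, g y ≠ ⊤) :
    (∫⁻ x, f x) ^ p * (∫⁻ y, g y) ^ q ≤ ∫⁻ z, h z := by
  rcases eq_or_ne (⨆ x, f x) 0 with hF₀ | hF₀
  · simp [ENNReal.iSup_eq_zero.1 hF₀, ENNReal.zero_rpow_of_pos hp]
  rcases eq_or_ne (⨆ y, g y) 0 with hG₀ | hG₀
  · simp [ENNReal.iSup_eq_zero.1 hG₀, ENNReal.zero_rpow_of_pos hq]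
  set c := (⨆ y, g y) / ⨆ x, f x
  have hc : c ≠ ⊤ := ENNReal.div_ne_top hG hF₀
  have hcp₀ : c ^ p ≠ 0 := (ENNReal.rpow_pos (ENNReal.div_pos hG₀ hF) hc).ne'
  have hcp : c ^ p ≠ ⊤ := ENNReal.rpow_ne_top_of_nonneg hp.le hc
  have hsup : ⨆ x, c * f x = ⨆ y, g y := by rw [← ENNReal.mul_iSup, ENNReal.div_mul_cancel hF₀ hF]
  have hscaled (x y : ℝ) : (c * f x) ^ p * g y ^ q ≤ c ^ p * h (p * x + q * y) := by
    rw [ENNReal.mul_rpow_of_nonneg _ _ hp.le, mul_assoc]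
    gcongr
    exact hfgh x y
  refine (ENNReal.mul_le_mul_iff_right hcp₀ hcp).1 ?_
  calc c ^ p * ((∫⁻ x, f x) ^ p * (∫⁻ y, g y) ^ q) = (c * ∫⁻ x, f x) ^ p * (∫⁻ y, g y) ^ q := by
        rw [ENNReal.mul_rpow_of_nonneg _ _ hp.le, mul_assoc]
    _ ≤ ENNReal.ofReal p * (c * ∫⁻ x, f x) + ENNReal.ofReal q * ∫⁻ y, g y :=
        ENNReal.geom_mean_le_arith_mean2_weighted hp hq hpq _ _
    _ ≤ ∫⁻ z, c ^ p * h z := by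
        rw [← lintegral_const_mul _ hf]
        exact Real.ofReal_mul_lintegral_add_le_of_iSup_eq hp hq hpq (hf.const_mul c) hg
          (hh.const_mul _) hscaled hsup
    _ = c ^ p * ∫⁻ z, h z := lintegral_const_mul _ hh

def PrekopaLeindler {E : Type*} [AddCommGroup E] [Module ℝ E] [MeasurableSpace E]
    (μ : Measure E) : Prop :=
  ∀ ⦃p q : ℝ⦄, 0 < p → 0 < q → p + q = 1 → ∀ ⦃f g h : E → ℝ≥0∞⦄,
    Measurable f → Measurable g → Measurable h →
    (∀ x y, f x ^ p * g y ^ q ≤ h (p • x + q • y)) →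
    (∫⁻ x, f x ∂μ) ^ p * (∫⁻ y, g y ∂μ) ^ q ≤ ∫⁻ z, h z ∂μ

theorem prekopaLeindler_volume_real : PrekopaLeindler (volume : Measure ℝ) := by
  intro p q hp hq hpq f g h hf hg hh hfgh
  have hpow {r : ℝ} (hr : 0 < r) (u : ℕ → ℝ≥0∞) : (⨆ n, u n) ^ r = ⨆ n, u n ^ r :=
    (ENNReal.orderIsoRpow r hr).map_iSup u
  rw [lintegral_eq_iSup_lintegral_min_natCast hf, lintegral_eq_iSup_lintegral_min_natCast hg,
    hpow hp, hpow hq, ENNReal.iSup_mul]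
  refine iSup_le fun m => ?_
  rw [ENNReal.mul_iSup]
  refine iSup_le fun n => ?_
  refine Real.lintegral_rpow_mul_rpow_le_of_iSup_ne_top hp hq hpq (hf.min measurable_const)
    (hg.min measurable_const) hh (fun x y => le_trans ?_ (hfgh x y))
    (ne_top_of_le_ne_top (ENNReal.natCast_ne_top m) (iSup_le fun _ => min_le_right _ _))
    (ne_top_of_le_ne_top (ENNReal.natCast_ne_top n) (iSup_le fun _ => min_le_right _ _))
  gcongr <;> exact min_le_left _ _

section

variable {E F : Type*} [AddCommGroup E] [Module ℝ E] [MeasurableSpace E]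
  [AddCommGroup F] [Module ℝ F] [MeasurableSpace F]

theorem prekopaLeindler_of_subsingleton [Subsingleton E] (μ : Measure E) :
    PrekopaLeindler μ := by
  intro p q hp hq hpq f g h _ _ _ hfgh
  have hconst (u : E → ℝ≥0∞) : ∫⁻ x, u x ∂μ = u 0 * μ univ := by
    rw [← lintegral_const]
    congr with x
    rw [Subsingleton.elim x 0]
  rw [hconst f, hconst g, hconst h, ENNReal.mul_rpow_of_nonneg _ _ hp.le,
    ENNReal.mul_rpow_of_nonneg _ _ hq.le, mul_mul_mul_comm,
    ← ENNReal.rpow_add_of_nonneg _ _ hp.le hq.le, hpq, ENNReal.rpow_one]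
  gcongr
  simpa using hfgh 0 0

theorem PrekopaLeindler.prod {μ : Measure E} {ν : Measure F} [SFinite μ] [SFinite ν]
    (hμ : PrekopaLeindler μ) (hν : PrekopaLeindler ν) : PrekopaLeindler (μ.prod ν) := by
  intro p q hp hq hpq f g h hf hg hh hfgh
  rw [lintegral_prod _ hf.aemeasurable, lintegral_prod _ hg.aemeasurable,
    lintegral_prod _ hh.aemeasurable]
  exact hμ hp hq hpq hf.lintegral_prod_right' hg.lintegral_prod_right' hh.lintegral_prod_right'
    fun x x' => hν hp hq hpq (hf.comp measurable_prodMk_left) (hg.comp measurable_prodMk_left)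
      (hh.comp measurable_prodMk_left) fun y y' => hfgh (x, y) (x', y')

theorem PrekopaLeindler.of_measurePreserving {μ : Measure E} {ν : Measure F}
    (hμ : PrekopaLeindler μ) (e : E →ₗ[ℝ] F) (he : MeasurePreserving e μ ν) :
    PrekopaLeindler ν := by
  intro p q hp hq hpq f g h hf hg hh hfgh
  rw [← he.lintegral_comp hf, ← he.lintegral_comp hg, ← he.lintegral_comp hh]
  exact hμ hp hq hpq (hf.comp he.measurable) (hg.comp he.measurable) (hh.comp he.measurable)
    fun x y => by simpa only [map_add, map_smul] using hfgh (e x) (e y)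

theorem PrekopaLeindler.measure_rpow_mul_rpow_le {μ : Measure E} (hμ : PrekopaLeindler μ)
    {p q : ℝ} (hp : 0 < p) (hq : 0 < q) (hpq : p + q = 1) {A B : Set E} (hA : MeasurableSet A)
    (hB : MeasurableSet B) (hAB : MeasurableSet (p • A + q • B)) :
    μ A ^ p * μ B ^ q ≤ μ (p • A + q • B) := by
  have key := hμ hp hq hpq (measurable_one.indicator hA) (measurable_one.indicator hB)
    (measurable_one.indicator hAB) fun x y => ?_
  · simpa [lintegral_indicator_one, hA, hB, hAB] using key
  by_cases hx : x ∈ A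
  · by_cases hy : y ∈ B
    · simp [hx, hy, add_mem_add (smul_mem_smul_set hx) (smul_mem_smul_set hy)]
    · simp [hy, ENNReal.zero_rpow_of_pos hq]
  · simp [hx, ENNReal.zero_rpow_of_pos hp]

end

theorem prekopaLeindler_volume_pi : ∀ n : ℕ, PrekopaLeindler (volume : Measure (Fin n → ℝ))
  | 0 => prekopaLeindler_of_subsingleton _
  | n + 1 => (prekopaLeindler_volume_real.prod (prekopaLeindler_volume_pi n)).of_measurePreserving
      (Fin.consLinearEquiv ℝ fun _ => ℝ).toLinearMap <| by
        have hcons : ⇑(Fin.consLinearEquiv ℝ fun _ : Fin (n + 1) => ℝ) =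
            (MeasurableEquiv.piFinSuccAbove (fun _ : Fin (n + 1) => ℝ) 0).symm := by
          ext v
          simp
        rw [LinearEquiv.coe_toLinearMap, hcons]
        exact (volume_preserving_piFinSuccAbove (fun _ : Fin (n + 1) => ℝ) 0).symm

theorem prekopaLeindler_volume_euclideanSpace (n : ℕ) :
    PrekopaLeindler (volume : Measure (EuclideanSpace ℝ (Fin n))) :=
  (prekopaLeindler_volume_pi n).of_measurePreserving (WithLp.linearEquiv 2 ℝ _).symm.toLinearMap
    (EuclideanSpace.volume_preserving_symm_measurableEquiv_toLp (Fin n)).symm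

theorem brunn_minkowski_multiplicative_general {n : ℕ}
    (K C : Set (EuclideanSpace ℝ (Fin n)))
    (hKcomp : IsCompact K)
    (hCcomp : IsCompact C)
    (lam : ℝ) (hlam : lam ∈ Set.Ioo (0 : ℝ) 1) :
    (volume ((1 - lam) • K + lam • C)).toReal ≥
      (volume K).toReal ^ (1 - lam) * (volume C).toReal ^ lam := by
  obtain ⟨hlam₀, hlam₁⟩ := hlam
  have hS : IsCompact ((1 - lam) • K + lam • C) := (hKcomp.smul _).add (hCcomp.smul _)
  have hBM := (prekopaLeindler_volume_euclideanSpace n).measure_rpow_mul_rpow_le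
    (sub_pos.2 hlam₁) hlam₀ (sub_add_cancel 1 lam) hKcomp.measurableSet hCcomp.measurableSet
    hS.measurableSet
  rw [ge_iff_le, ENNReal.toReal_rpow, ENNReal.toReal_rpow, ← ENNReal.toReal_mul]
  exact ENNReal.toReal_mono hS.measure_lt_top.ne hBM

/-- Multiplicative (dimension-free) form of the Brunn-Minkowski inequality. -/
theorem brunn_minkowski_multiplicative {n : ℕ} (hn : 0 < n)
    (K C : Set (EuclideanSpace ℝ (Fin n)))
    (hKcomp : IsCompact K) (hKconv : Convex ℝ K) (hKint : (interior K).Nonempty)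
    (hCcomp : IsCompact C) (hCconv : Convex ℝ C) (hCint : (interior C).Nonempty)
    (lam : ℝ) (hlam : lam ∈ Set.Ioo (0 : ℝ) 1) :
    (volume ((1 - lam) • K + lam • C)).toReal ≥
      (volume K).toReal ^ (1 - lam) * (volume C).toReal ^ lam :=
  brunn_minkowski_multiplicative_general K C hKcomp hCcomp lam hlam
end

section
/- Minkowski's inequality: for convex bodies K and C in ℝ^n, V(K,C;1)^n ≥ V(K)^(n-1) V(C), where V(K,C;1) = (1/n) lim_{ε→0+}(V(K+εC)-V(K))/ε. -/
open Set MeasureTheory Filter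
open scoped Pointwise Topology ENNReal

/-!
Brunn–Minkowski in multiplicative form, `V(K)^(1-t) V(C)^t ≤ V((1-t)K + tC)`, is proved by
induction on the dimension: slicing along the first coordinate, the slice volumes satisfy the
hypothesis of the one-dimensional Prékopa–Leindler inequality, which itself reduces, through the
layer-cake formula, to `|A| + |B| ≤ |A + B|` on the line. Rescaling gives the additive form
`V(K)^(1/n) + ε V(C)^(1/n) ≤ V(K + εC)^(1/n)`, so `ε ↦ (V(K)^(1/n) + ε V(C)^(1/n))^n` lies below
`ε ↦ V(K + εC)` for `ε > 0` with equality at `ε = 0`. Comparing right derivatives at `0` gives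
`V(K)^((n-1)/n) V(C)^(1/n) ≤ W`.
-/

theorem ENNReal.rpow_one_sub_mul_rpow_le {t : ℝ} (ht₀ : 0 < t) (ht₁ : t < 1) (a b : ℝ≥0∞) :
    a ^ (1 - t) * b ^ t ≤ ENNReal.ofReal (1 - t) * a + ENNReal.ofReal t * b := by
  have h1t : 0 < 1 - t := sub_pos.2 ht₁
  have hyoung := ENNReal.young_inequality (a ^ (1 - t)) (b ^ t)
    (Real.HolderConjugate.inv_inv h1t ht₀ (sub_add_cancel 1 t))
  rwa [ENNReal.rpow_rpow_inv h1t.ne', ENNReal.rpow_rpow_inv ht₀.ne', div_eq_mul_inv,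
    div_eq_mul_inv, ← ENNReal.ofReal_inv_of_pos (inv_pos.2 h1t), inv_inv,
    ← ENNReal.ofReal_inv_of_pos (inv_pos.2 ht₀), inv_inv, mul_comm a, mul_comm b] at hyoung

theorem ENNReal.iSup_mul_inv_iSup {ι : Type*} {φ : ι → ℝ≥0∞} (h₀ : ⨆ i, φ i ≠ 0)
    (h_top : ⨆ i, φ i ≠ ∞) : ⨆ i, φ i * (⨆ j, φ j)⁻¹ = 1 := by
  rw [← ENNReal.iSup_mul, ENNReal.mul_inv_cancel h₀ h_top]

section LayerCake

variable {α : Type*} [MeasurableSpace α] {μ : Measure α}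

theorem lintegral_eq_setLIntegral_Ioo_meas_lt_of_le_one {f : α → ℝ≥0∞} (hf : Measurable f)
    (hf₁ : ∀ x, f x ≤ 1) :
    ∫⁻ x, f x ∂μ = ∫⁻ s in Ioo 0 1, μ {x | ENNReal.ofReal s < f x} := by
  have hfin : ∀ x, f x ≠ ∞ := fun x => ne_top_of_le_ne_top ENNReal.one_ne_top (hf₁ x)
  have hIci : ∫⁻ s in Ici 1, μ {x | ENNReal.ofReal s < f x} = 0 := by
    refine (setLIntegral_congr_fun measurableSet_Ici fun s (hs : 1 ≤ s) => ?_).trans lintegral_zero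
    refine measure_mono_null (fun x (hx : ENNReal.ofReal s < f x) => ?_) measure_empty
    exact (lt_irrefl _ (hx.trans_le ((hf₁ x).trans (ENNReal.one_le_ofReal.2 hs)))).elim
  calc ∫⁻ x, f x ∂μ = ∫⁻ x, ENNReal.ofReal (f x).toReal ∂μ := by
        simp only [ENNReal.ofReal_toReal (hfin _)]
    _ = ∫⁻ s in Ioi 0, μ {x | s < (f x).toReal} :=
        lintegral_eq_lintegral_meas_lt μ (ae_of_all _ fun _ => ENNReal.toReal_nonneg)
          hf.ennreal_toReal.aemeasurable
    _ = ∫⁻ s in Ioi 0, μ {x | ENNReal.ofReal s < f x} :=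
        setLIntegral_congr_fun measurableSet_Ioi fun s (hs : 0 < s) => by
          simp only [ENNReal.ofReal_lt_iff_lt_toReal hs.le (hfin _)]
    _ = ∫⁻ s in Ioo 0 1, μ {x | ENNReal.ofReal s < f x} := by
        rw [← Ioo_union_Ici_eq_Ioi zero_lt_one,
          lintegral_union measurableSet_Ici
            (disjoint_left.2 fun _ hs hs' => lt_irrefl _ (hs.2.trans_le hs')), hIci, add_zero]

theorem setLIntegral_Ioo_meas_lt_le_lintegral {f : α → ℝ≥0∞} (hf : Measurable f) :
    ∫⁻ s in Ioo 0 1, μ {x | ENNReal.ofReal s < f x} ≤ ∫⁻ x, f x ∂μ :=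
  calc ∫⁻ s in Ioo 0 1, μ {x | ENNReal.ofReal s < f x}
      = ∫⁻ s in Ioo 0 1, μ {x | ENNReal.ofReal s < min (f x) 1} :=
        setLIntegral_congr_fun measurableSet_Ioo fun s hs => by
          simp only [lt_min_iff, ENNReal.ofReal_lt_one.2 hs.2, and_true]
    _ = ∫⁻ x, min (f x) 1 ∂μ :=
        (lintegral_eq_setLIntegral_Ioo_meas_lt_of_le_one (hf.min measurable_const)
          fun _ => min_le_right _ _).symm
    _ ≤ ∫⁻ x, f x ∂μ := lintegral_mono fun _ => min_le_left _ _

end LayerCake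

namespace Real

theorem volume_add_volume_le_volume_add_s9 {A B : Set ℝ} (hA : IsCompact A) (hB : IsCompact B)
    (hA₀ : A.Nonempty) (hB₀ : B.Nonempty) : volume A + volume B ≤ volume (A + B) := by
  set a := sSup A
  set b := sInf B
  have hvol : ∀ (c : ℝ) (S : Set ℝ), volume ({c} + S) = volume S := fun c S => by
    rw [singleton_add, image_add_left, measure_preimage_add]
  have hinter : ({b} + A) ∩ ({a} + B) ⊆ {a + b} := by
    rintro _ ⟨⟨_, rfl, x, hx, rfl⟩, ⟨_, rfl, y, hy, hxy⟩⟩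
    have hxa : x ≤ a := le_csSup hA.bddAbove hx
    have hby : b ≤ y := csInf_le hB.bddBelow hy
    rw [mem_singleton_iff]
    linarith
  have hsub : {b} + A ∪ ({a} + B) ⊆ A + B := by
    refine union_subset ?_ (add_subset_add (singleton_subset_iff.2 (hA.sSup_mem hA₀)) subset_rfl)
    rw [add_comm A]
    exact add_subset_add (singleton_subset_iff.2 (hB.sInf_mem hB₀)) subset_rfl
  calc volume A + volume B = volume ({b} + A) + volume ({a} + B) := by rw [hvol, hvol]
    _ = volume ({b} + A ∪ ({a} + B)) := by
      rw [← measure_union_add_inter _ (isCompact_singleton.add hB).measurableSet,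
        measure_mono_null hinter (measure_singleton _), add_zero]
    _ ≤ volume (A + B) := measure_mono hsub

theorem volume_add_volume_le_of_add_subset {A B U : Set ℝ} (hA : MeasurableSet A)
    (hB : MeasurableSet B) {a b : ℝ} (ha : a ∈ A) (hb : b ∈ B) (hU : A + B ⊆ U) :
    volume A + volume B ≤ volume U := by
  rw [hA.measure_eq_iSup_isCompact, hB.measure_eq_iSup_isCompact]
  simp only [iSup_and']
  refine ENNReal.biSup_add_biSup_le' ⟨∅, empty_subset _, isCompact_empty⟩
    ⟨∅, empty_subset _, isCompact_empty⟩ fun KA ⟨hKA, hKAc⟩ KB ⟨hKB, hKBc⟩ => ?_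
  -- adjoining a point makes the compact approximations nonempty
  calc volume KA + volume KB ≤ volume (insert a KA) + volume (insert b KB) := by
        gcongr <;> exact subset_insert _ _
    _ ≤ volume (insert a KA + insert b KB) :=
        volume_add_volume_le_volume_add_s9 (hKAc.insert a) (hKBc.insert b)
          (insert_nonempty _ _) (insert_nonempty _ _)
    _ ≤ volume U :=
        measure_mono ((add_subset_add (insert_subset ha hKA) (insert_subset hb hKB)).trans hU)

theorem prekopa_leindler_of_iSup_eq_one {t : ℝ} (ht₀ : 0 < t) (ht₁ : t < 1)
    {f g h : ℝ → ℝ≥0∞} (hf : Measurable f) (hg : Measurable g) (hh : Measurable h)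
    (hf₁ : ∀ x, f x ≤ 1) (hg₁ : ∀ x, g x ≤ 1) (hf_sup : ⨆ x, f x = 1) (hg_sup : ⨆ x, g x = 1)
    (hfgh : ∀ x y, f x ^ (1 - t) * g y ^ t ≤ h ((1 - t) * x + t * y)) :
    (∫⁻ x, f x) ^ (1 - t) * (∫⁻ x, g x) ^ t ≤ ∫⁻ x, h x := by
  have h1t : 0 < 1 - t := sub_pos.2 ht₁
  let L : (ℝ → ℝ≥0∞) → ℝ → Set ℝ := fun φ s => {x | ENNReal.ofReal s < φ x}
  have hL_meas : ∀ φ, Measurable φ → ∀ s, MeasurableSet (L φ s) := fun φ hφ s =>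
    measurableSet_lt measurable_const hφ
  have hL_volume_meas : ∀ φ, Measurable fun s => volume (L φ s) := fun φ =>
    Antitone.measurable fun s s' hss' => measure_mono fun x (hx : _ < φ x) =>
      (ENNReal.ofReal_le_ofReal hss').trans_lt hx
  have hlevel : ∀ s ∈ Ioo (0 : ℝ) 1, ENNReal.ofReal (1 - t) * volume (L f s)
      + ENNReal.ofReal t * volume (L g s) ≤ volume (L h s) := by
    rintro s ⟨hs₀, hs₁⟩
    have hL_nonempty : ∀ φ : ℝ → ℝ≥0∞, ⨆ x, φ x = 1 → (L φ s).Nonempty := fun φ hφ => by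
      obtain ⟨x, hx⟩ := lt_iSup_iff.1 (hφ ▸ ENNReal.ofReal_lt_one.2 hs₁)
      exact ⟨x, hx⟩
    obtain ⟨x₀, hx₀⟩ := hL_nonempty f hf_sup
    obtain ⟨y₀, hy₀⟩ := hL_nonempty g hg_sup
    have hsub : (1 - t) • L f s + t • L g s ⊆ L h s := by
      rintro _ ⟨_, ⟨x, hx, rfl⟩, _, ⟨y, hy, rfl⟩, rfl⟩
      calc ENNReal.ofReal s = ENNReal.ofReal s ^ (1 - t) * ENNReal.ofReal s ^ t := by
            rw [← ENNReal.rpow_add _ _ (ENNReal.ofReal_pos.2 hs₀).ne' ENNReal.ofReal_ne_top,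
              sub_add_cancel, ENNReal.rpow_one]
        _ < f x ^ (1 - t) * g y ^ t :=
            ENNReal.mul_lt_mul (ENNReal.rpow_lt_rpow hx h1t) (ENNReal.rpow_lt_rpow hy ht₀)
        _ ≤ h ((1 - t) * x + t * y) := hfgh x y
    have hvol_smul : ∀ {r : ℝ}, 0 ≤ r → ∀ A : Set ℝ,
        volume (r • A) = ENNReal.ofReal r * volume A := fun hr A => by
      rw [Measure.addHaar_smul_of_nonneg volume hr, Module.finrank_self, pow_one]
    rw [← hvol_smul h1t.le, ← hvol_smul ht₀.le]
    exact volume_add_volume_le_of_add_subset ((hL_meas f hf s).const_smul₀ _)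
      ((hL_meas g hg s).const_smul₀ _) (smul_mem_smul_set hx₀) (smul_mem_smul_set hy₀) hsub
  calc (∫⁻ x, f x) ^ (1 - t) * (∫⁻ x, g x) ^ t
      ≤ ENNReal.ofReal (1 - t) * (∫⁻ x, f x) + ENNReal.ofReal t * ∫⁻ x, g x :=
        ENNReal.rpow_one_sub_mul_rpow_le ht₀ ht₁ _ _
    _ = ∫⁻ s in Ioo 0 1,
          (ENNReal.ofReal (1 - t) * volume (L f s) + ENNReal.ofReal t * volume (L g s)) := by
        rw [lintegral_eq_setLIntegral_Ioo_meas_lt_of_le_one hf hf₁,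
          lintegral_eq_setLIntegral_Ioo_meas_lt_of_le_one hg hg₁,
          lintegral_add_left ((hL_volume_meas f).const_mul _), lintegral_const_mul _ (hL_volume_meas f),
          lintegral_const_mul _ (hL_volume_meas g)]
    _ ≤ ∫⁻ s in Ioo 0 1, volume (L h s) := setLIntegral_mono (hL_volume_meas h) hlevel
    _ ≤ ∫⁻ x, h x := setLIntegral_Ioo_meas_lt_le_lintegral hh

theorem prekopa_leindler {t : ℝ} (ht₀ : 0 < t) (ht₁ : t < 1) {f g h : ℝ → ℝ≥0∞}
    (hf : Measurable f) (hg : Measurable g) (hh : Measurable h)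
    (hf_sup : ⨆ x, f x ≠ ∞) (hg_sup : ⨆ x, g x ≠ ∞)
    (hfgh : ∀ x y, f x ^ (1 - t) * g y ^ t ≤ h ((1 - t) * x + t * y)) :
    (∫⁻ x, f x) ^ (1 - t) * (∫⁻ x, g x) ^ t ≤ ∫⁻ x, h x := by
  have h1t : 0 < 1 - t := sub_pos.2 ht₁
  set F := ⨆ x, f x
  set G := ⨆ x, g x
  rcases eq_or_ne F 0 with hF | hF
  · have hf0 : ∫⁻ x, f x = 0 := by simp [ENNReal.iSup_eq_zero.1 hF]
    rw [hf0, ENNReal.zero_rpow_of_pos h1t, zero_mul]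
    exact zero_le
  rcases eq_or_ne G 0 with hG | hG
  · have hg0 : ∫⁻ x, g x = 0 := by simp [ENNReal.iSup_eq_zero.1 hG]
    rw [hg0, ENNReal.zero_rpow_of_pos ht₀, mul_zero]
    exact zero_le
  set c := F ^ (1 - t) * G ^ t
  have hc₀ : c ≠ 0 := mul_ne_zero (ENNReal.rpow_pos (pos_iff_ne_zero.2 hF) hf_sup).ne'
    (ENNReal.rpow_pos (pos_iff_ne_zero.2 hG) hg_sup).ne'
  have hc_top : c ≠ ∞ := ENNReal.mul_ne_top (ENNReal.rpow_ne_top_of_nonneg h1t.le hf_sup)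
    (ENNReal.rpow_ne_top_of_nonneg ht₀.le hg_sup)
  have hscale : ∀ a b : ℝ≥0∞,
      (a * F⁻¹) ^ (1 - t) * (b * G⁻¹) ^ t = a ^ (1 - t) * b ^ t * c⁻¹ := by
    intro a b
    rw [ENNReal.mul_rpow_of_nonneg _ _ h1t.le, ENNReal.mul_rpow_of_nonneg _ _ ht₀.le,
      ENNReal.inv_rpow, ENNReal.inv_rpow,
      ENNReal.mul_inv (Or.inr (ENNReal.rpow_ne_top_of_nonneg ht₀.le hg_sup))
        (Or.inl (ENNReal.rpow_ne_top_of_nonneg h1t.le hf_sup))]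
    ring
  have hf_sup₁ := ENNReal.iSup_mul_inv_iSup hF hf_sup
  have hg_sup₁ := ENNReal.iSup_mul_inv_iSup hG hg_sup
  have key := prekopa_leindler_of_iSup_eq_one ht₀ ht₁ (hf.mul_const F⁻¹) (hg.mul_const G⁻¹)
    (hh.mul_const c⁻¹) (fun x => (le_iSup _ x).trans_eq hf_sup₁)
    (fun x => (le_iSup _ x).trans_eq hg_sup₁) hf_sup₁ hg_sup₁ fun x y => by
      rw [hscale]; exact mul_le_mul_left (hfgh x y) _
  rw [lintegral_mul_const _ hf, lintegral_mul_const _ hg, lintegral_mul_const _ hh, hscale] at key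
  exact (ENNReal.mul_le_mul_iff_left (ENNReal.inv_ne_zero.2 hc_top)
    (ENNReal.inv_ne_top.2 hc₀)).1 key

end Real

def SatisfiesBrunnMinkowski {E : Type*} [AddCommGroup E] [Module ℝ E] [TopologicalSpace E]
    [MeasurableSpace E] (μ : Measure E) : Prop :=
  ∀ ⦃t : ℝ⦄, 0 < t → t < 1 → ∀ ⦃K C : Set E⦄, IsCompact K → IsCompact C → K.Nonempty →
    C.Nonempty → μ K ^ (1 - t) * μ C ^ t ≤ μ ((1 - t) • K + t • C)

namespace SatisfiesBrunnMinkowski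

variable {E F : Type*} [NormedAddCommGroup E] [NormedSpace ℝ E] [MeasurableSpace E]
  [NormedAddCommGroup F] [NormedSpace ℝ F] [MeasurableSpace F]

theorem of_subsingleton [Subsingleton E] (μ : Measure E) [IsProbabilityMeasure μ] :
    SatisfiesBrunnMinkowski μ := by
  intro t _ _ K C _ _ hK₀ hC₀
  rw [(hK₀.smul_set.add hC₀.smul_set).eq_univ, hK₀.eq_univ, hC₀.eq_univ, measure_univ,
    ENNReal.one_rpow, ENNReal.one_rpow, one_mul]

theorem map_continuousLinearEquiv [BorelSpace F] {μ : Measure E} {ν : Measure F}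
    (hμ : SatisfiesBrunnMinkowski μ) (e : E ≃L[ℝ] F) (he : MeasurePreserving e μ ν) :
    SatisfiesBrunnMinkowski ν := by
  intro t ht₀ ht₁ K C hK hC hK₀ hC₀
  have hpreimage : ∀ {S : Set F}, IsCompact S → μ (e ⁻¹' S) = ν S := fun hS =>
    he.measure_preimage hS.measurableSet.nullMeasurableSet
  have hcompact : ∀ {S : Set F}, IsCompact S → IsCompact (e ⁻¹' S) := fun hS =>
    e.toHomeomorph.isCompact_preimage.2 hS
  have hcomb : e ⁻¹' ((1 - t) • K + t • C) = (1 - t) • e ⁻¹' K + t • e ⁻¹' C := by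
    simp only [← e.image_symm_eq_preimage, image_add, image_smul_set]
  rw [← hpreimage hK, ← hpreimage hC, ← hpreimage ((hK.smul _).add (hC.smul _)), hcomb]
  exact hμ ht₀ ht₁ (hcompact hK) (hcompact hC) (hK₀.preimage e.surjective)
    (hC₀.preimage e.surjective)

theorem prod_volume [BorelSpace E] {μ : Measure E} [SFinite μ] [IsFiniteMeasureOnCompacts μ]
    (hμ : SatisfiesBrunnMinkowski μ) : SatisfiesBrunnMinkowski ((volume : Measure ℝ).prod μ) := by
  intro t ht₀ ht₁ K C hK hC hK₀ hC₀
  have h1t : 0 < 1 - t := sub_pos.2 ht₁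
  have hS : IsCompact ((1 - t) • K + t • C) := (hK.smul _).add (hC.smul _)
  have hslice_subset : ∀ (T : Set (ℝ × E)) (a : ℝ), Prod.mk a ⁻¹' T ⊆ Prod.snd '' T :=
    fun T a y hy => ⟨(a, y), hy, rfl⟩
  have hslice_compact : ∀ {T : Set (ℝ × E)}, IsCompact T → ∀ a, IsCompact (Prod.mk a ⁻¹' T) :=
    fun hT a => (hT.image continuous_snd).of_isClosed_subset
      (hT.isClosed.preimage (Continuous.prodMk_right a)) (hslice_subset _ a)
  have hsup : ∀ {T : Set (ℝ × E)}, IsCompact T → ⨆ a, μ (Prod.mk a ⁻¹' T) ≠ ∞ := fun hT =>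
    ne_top_of_le_ne_top (hT.image continuous_snd).measure_lt_top.ne
      (iSup_le fun a => measure_mono (hslice_subset _ a))
  have hslices : ∀ a b, μ (Prod.mk a ⁻¹' K) ^ (1 - t) * μ (Prod.mk b ⁻¹' C) ^ t ≤
      μ (Prod.mk ((1 - t) * a + t * b) ⁻¹' ((1 - t) • K + t • C)) := by
    intro a b
    rcases (Prod.mk a ⁻¹' K).eq_empty_or_nonempty with hKa | hKa
    · rw [hKa, measure_empty, ENNReal.zero_rpow_of_pos h1t, zero_mul]
      exact zero_le
    rcases (Prod.mk b ⁻¹' C).eq_empty_or_nonempty with hCb | hCb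
    · rw [hCb, measure_empty, ENNReal.zero_rpow_of_pos ht₀, mul_zero]
      exact zero_le
    refine (hμ ht₀ ht₁ (hslice_compact hK a) (hslice_compact hC b) hKa hCb).trans
      (measure_mono ?_)
    rintro _ ⟨_, ⟨u, hu, rfl⟩, _, ⟨v, hv, rfl⟩, rfl⟩
    exact ⟨(1 - t) • (a, u), smul_mem_smul_set hu, t • (b, v), smul_mem_smul_set hv, rfl⟩
  rw [Measure.prod_apply hK.measurableSet, Measure.prod_apply hC.measurableSet,
    Measure.prod_apply hS.measurableSet]
  exact Real.prekopa_leindler ht₀ ht₁ (measurable_measure_prodMk_left hK.measurableSet)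
    (measurable_measure_prodMk_left hC.measurableSet)
    (measurable_measure_prodMk_left hS.measurableSet) (hsup hK) (hsup hC) hslices

end SatisfiesBrunnMinkowski

theorem satisfiesBrunnMinkowski_volume_pi (n : ℕ) :
    SatisfiesBrunnMinkowski (volume : Measure (Fin n → ℝ)) := by
  induction n with
  | zero =>
    rw [volume_pi, Measure.pi_of_empty]
    exact .of_subsingleton _
  | succ n ih =>
    have hcons : ⇑(Fin.consEquivL ℝ fun _ : Fin (n + 1) => ℝ) =
        (MeasurableEquiv.piFinSuccAbove (fun _ : Fin (n + 1) => ℝ) 0).symm := by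
      funext x
      ext i
      refine Fin.cases ?_ (fun j => ?_) i <;> simp
    have hmp : MeasurePreserving (Fin.consEquivL ℝ fun _ : Fin (n + 1) => ℝ)
        ((volume : Measure ℝ).prod volume) volume := by
      rw [← Measure.volume_eq_prod, hcons]
      exact (volume_preserving_piFinSuccAbove (fun _ => ℝ) 0).symm
    exact ih.prod_volume.map_continuousLinearEquiv _ hmp

theorem EuclideanSpace.satisfiesBrunnMinkowski_volume (n : ℕ) :
    SatisfiesBrunnMinkowski (volume : Measure (EuclideanSpace ℝ (Fin n))) :=
  (satisfiesBrunnMinkowski_volume_pi n).map_continuousLinearEquiv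
    (PiLp.continuousLinearEquiv 2 ℝ _).symm (PiLp.volume_preserving_toLp _)

theorem SatisfiesBrunnMinkowski.rpow_inv_finrank_add_le {E : Type*} [NormedAddCommGroup E]
    [NormedSpace ℝ E] [MeasurableSpace E] [BorelSpace E] [FiniteDimensional ℝ E]
    {μ : Measure E} [μ.IsAddHaarMeasure] (hμ : SatisfiesBrunnMinkowski μ)
    (hE : 0 < Module.finrank ℝ E) {K C : Set E} (hK : IsCompact K) (hC : IsCompact C)
    (hK₀ : μ K ≠ 0) (hC₀ : μ C ≠ 0) :
    (μ K).toReal ^ (Module.finrank ℝ E : ℝ)⁻¹ + (μ C).toReal ^ (Module.finrank ℝ E : ℝ)⁻¹ ≤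
      (μ (K + C)).toReal ^ (Module.finrank ℝ E : ℝ)⁻¹ := by
  set d := Module.finrank ℝ E
  have hroot_pos : ∀ {S : Set E}, IsCompact S → μ S ≠ 0 → 0 < (μ S).toReal ^ (d : ℝ)⁻¹ :=
    fun hS hS₀ => Real.rpow_pos_of_pos (ENNReal.toReal_pos hS₀ hS.measure_lt_top.ne) _
  set α := (μ K).toReal ^ (d : ℝ)⁻¹
  set β := (μ C).toReal ^ (d : ℝ)⁻¹
  have hα : 0 < α := hroot_pos hK hK₀
  have hβ : 0 < β := hroot_pos hC hC₀
  set s := α + β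
  -- dilating `K` by `s / α` and `C` by `s / β` gives two sets of measure `s ^ d` whose
  -- combination with weights `α / s` and `β / s` is `K + C`
  have hdilate : ∀ {S : Set E}, IsCompact S → μ S ≠ 0 →
      μ ((s / (μ S).toReal ^ (d : ℝ)⁻¹) • S) = ENNReal.ofReal (s ^ d) := fun {S} hS hS₀ => by
    have hγ := hroot_pos hS hS₀
    have hγd : ((μ S).toReal ^ (d : ℝ)⁻¹) ^ d = (μ S).toReal :=
      Real.rpow_inv_natCast_pow ENNReal.toReal_nonneg hE.ne'
    rw [Measure.addHaar_smul_of_nonneg μ (by positivity), div_pow, hγd,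
      ENNReal.ofReal_div_of_pos (ENNReal.toReal_pos hS₀ hS.measure_lt_top.ne),
      ENNReal.ofReal_toReal hS.measure_lt_top.ne, ENNReal.div_mul_cancel hS₀ hS.measure_lt_top.ne]
  have hs : 0 < s := add_pos hα hβ
  set t := β / s
  have ht₀ : 0 < t := div_pos hβ hs
  have ht₁ : t < 1 := (div_lt_one hs).2 (lt_add_of_pos_left β hα)
  have hK_coeff : (1 - t) * (s / α) = 1 := by
    rw [one_sub_div hs.ne', add_sub_cancel_right, div_mul_div_cancel₀ hs.ne', div_self hα.ne']
  have hC_coeff : t * (s / β) = 1 := by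
    rw [div_mul_div_cancel₀ hs.ne', div_self hβ.ne']
  have hBM := hμ ht₀ ht₁ (hK.smul (s / α)) (hC.smul (s / β))
    (nonempty_of_measure_ne_zero hK₀).smul_set (nonempty_of_measure_ne_zero hC₀).smul_set
  have hs_pos : 0 < s ^ d := by positivity
  rw [smul_smul, smul_smul, hK_coeff, hC_coeff, one_smul, one_smul, hdilate hK hK₀,
    hdilate hC hC₀, ← ENNReal.rpow_add _ _ (ENNReal.ofReal_pos.2 hs_pos).ne'
    ENNReal.ofReal_ne_top, sub_add_cancel, ENNReal.rpow_one] at hBM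
  rw [Real.le_rpow_inv_iff_of_pos hs.le ENNReal.toReal_nonneg (by positivity),
    Real.rpow_natCast]
  exact (ENNReal.ofReal_le_iff_le_toReal ((hK.add hC).measure_lt_top.ne)).1 hBM

theorem EuclideanSpace.add_mul_rpow_inv_pow_le_volume_add_smul {n : ℕ} (hn : 0 < n)
    {K C : Set (EuclideanSpace ℝ (Fin n))} (hK : IsCompact K) (hC : IsCompact C)
    (hK₀ : volume K ≠ 0) (hC₀ : volume C ≠ 0) {ε : ℝ} (hε : 0 < ε) :
    ((volume K).toReal ^ (n : ℝ)⁻¹ + ε * (volume C).toReal ^ (n : ℝ)⁻¹) ^ n ≤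
      (volume (K + ε • C)).toReal := by
  have hdim : Module.finrank ℝ (EuclideanSpace ℝ (Fin n)) = n := finrank_euclideanSpace_fin
  have hεC : volume (ε • C) = ENNReal.ofReal (ε ^ n) * volume C := by
    rw [Measure.addHaar_smul_of_nonneg _ hε.le, hdim]
  have hBM := (satisfiesBrunnMinkowski_volume n).rpow_inv_finrank_add_le (hdim.symm ▸ hn) hK
    (hC.smul ε) hK₀ (hεC ▸ mul_ne_zero (ENNReal.ofReal_pos.2 (pow_pos hε n)).ne' hC₀)
  rw [hdim, hεC, ENNReal.toReal_mul, ENNReal.toReal_ofReal (pow_pos hε n).le,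
    Real.mul_rpow (pow_pos hε n).le ENNReal.toReal_nonneg,
    Real.pow_rpow_inv_natCast hε.le hn.ne'] at hBM
  calc _ ≤ ((volume (K + ε • C)).toReal ^ (n : ℝ)⁻¹) ^ n :=
        pow_le_pow_left₀ (by positivity) hBM n
    _ = (volume (K + ε • C)).toReal := Real.rpow_inv_natCast_pow ENNReal.toReal_nonneg hn.ne'

theorem HasDerivAt.le_of_le_of_tendsto_slope {f g : ℝ → ℝ} {f' L : ℝ} (hf : HasDerivAt f f' 0)
    (hfg : ∀ ε > 0, f ε ≤ g ε) (hg : Tendsto (fun ε => (g ε - f 0) / ε) (𝓝[>] 0) (𝓝 L)) :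
    f' ≤ L := by
  refine le_of_tendsto_of_tendsto hf.tendsto_slope_zero_right hg ?_
  filter_upwards [self_mem_nhdsWithin] with ε (hε : 0 < ε)
  rw [zero_add, smul_eq_mul, inv_mul_eq_div]
  exact div_le_div_of_nonneg_right (sub_le_sub_right (hfg ε hε) _) hε.le

theorem minkowski_first_inequality_general {n : ℕ} (hn : 0 < n)
    (K C : Set (EuclideanSpace ℝ (Fin n)))
    (hKcomp : IsCompact K) (hKint : (interior K).Nonempty)
    (hCcomp : IsCompact C) (hCint : (interior C).Nonempty)
    (W : ℝ)
    (hW : Tendsto (fun ε : ℝ => ((volume (K + ε • C)).toReal - (volume K).toReal) / ε)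
      (𝓝[>] 0) (𝓝 ((n : ℝ) * W))) :
    W ^ n ≥ (volume K).toReal ^ (n - 1) * (volume C).toReal := by
  set α := (volume K).toReal ^ (n : ℝ)⁻¹
  set β := (volume C).toReal ^ (n : ℝ)⁻¹
  have hαn : α ^ n = (volume K).toReal := Real.rpow_inv_natCast_pow ENNReal.toReal_nonneg hn.ne'
  have hβn : β ^ n = (volume C).toReal := Real.rpow_inv_natCast_pow ENNReal.toReal_nonneg hn.ne'
  have hBM : ∀ ε > 0, (α + ε * β) ^ n ≤ (volume (K + ε • C)).toReal := fun _ hε =>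
    EuclideanSpace.add_mul_rpow_inv_pow_le_volume_add_smul hn hKcomp hCcomp
      (Measure.measure_pos_of_nonempty_interior _ hKint).ne'
      (Measure.measure_pos_of_nonempty_interior _ hCint).ne' hε
  have hderiv : HasDerivAt (fun ε => (α + ε * β) ^ n) (n * α ^ (n - 1) * β) 0 := by
    simpa [Pi.pow_def] using ((hasDerivAt_mul_const (x := (0 : ℝ)) β).const_add α).pow n
  have hmixed : (n : ℝ) * (α ^ (n - 1) * β) ≤ n * W := by
    rw [← mul_assoc]
    exact hderiv.le_of_le_of_tendsto_slope hBM (by simpa [hαn] using hW)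
  calc (volume K).toReal ^ (n - 1) * (volume C).toReal = (α ^ (n - 1) * β) ^ n := by
        rw [mul_pow, ← pow_mul, mul_comm (n - 1), pow_mul, hαn, hβn]
    _ ≤ W ^ n := pow_le_pow_left₀ (by positivity)
        (le_of_mul_le_mul_left hmixed (Nat.cast_pos.2 hn)) n

/-- Minkowski's first inequality: `V(K,C;1)^n ≥ V(K)^{n-1} V(C)`, where the first mixed
volume `V(K,C;1)` is given by `(1/n) lim_{ε→0⁺} (V(K+εC)-V(K))/ε`. -/
theorem minkowski_first_inequality {n : ℕ} (hn : 0 < n)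
    (K C : Set (EuclideanSpace ℝ (Fin n)))
    (hKcomp : IsCompact K) (hKconv : Convex ℝ K) (hKint : (interior K).Nonempty)
    (hCcomp : IsCompact C) (hCconv : Convex ℝ C) (hCint : (interior C).Nonempty)
    (W : ℝ)
    (hW : Tendsto (fun ε : ℝ => ((volume (K + ε • C)).toReal - (volume K).toReal) / ε)
      (𝓝[>] 0) (𝓝 ((n : ℝ) * W))) :
    W ^ n ≥ (volume K).toReal ^ (n - 1) * (volume C).toReal :=
  minkowski_first_inequality_general hn K C hKcomp hKint hCcomp hCint W hW
end
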